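/- arXiv:1301.7521 — 3 statements merged into one kernel-verified Lean document; each statement's English description precedes it below -/
import Mathlib

section
/- If a semicubical set X is the union of semicubical subsets X₁ and X₂, then for each ε ∈ {0,1} there is a long exact sequence ⋯ → H_n^ε(X₁ ∩ X₂) → H_n^ε(X₁) ⊕ H_n^ε(X₂) → H_n^ε(X) → H_{n-1}^ε(X₁ ∩ X₂) → ⋯ of Goubault homology groups. -/
/-!
The inclusions of cubes give a short exact sequence of Goubault chain complexes
`0 → C(X₁ ∩ X₂) → C(X₁) ⊕ C(X₂) → C(X) → 0`, `σ ↦ (σ, σ)`, `(σ₁, σ₂) ↦ σ₁ - σ₂`: a chain of `X₁`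
and a chain of `X₂` that agree in `X` are supported on `X₁ ∩ X₂`, and every cube of `X = X₁ ∪ X₂`
lies in `X₁` or in `X₂`. The long exact homology sequence of this short exact sequence of chain
complexes, read through the identification of categorical homology with the explicit quotients
`ker / im` defining `H^ε`, is the Mayer–Vietoris sequence.
-/

/-- A semicubical set: sets `X n` with boundary maps `∂_i^{n,ε}`.
`face n i ε : X (n+1) → X n` encodes `∂_{i+1}^{n+1,ε}` (so `i : Fin (n+1)` ranges over `1,…,n+1`). -/
structure SCSet : Type 1 where
  X : ℕ → Type
  face : ∀ n, Fin (n + 1) → Bool → X (n + 1) → X n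
  comm : ∀ n (α β : Bool) (i : Fin (n + 1)) (j : Fin (n + 2)), (i : ℕ) < (j : ℕ) →
    ∀ x, face n i α (face (n + 1) j β x) =
      face n ⟨(j : ℕ) - 1, by have := j.isLt; omega⟩ β (face (n + 1) i.castSucc α x)

/-- Chain group: free abelian group on the `n`-cubes. -/
abbrev SCSet.C (Xs : SCSet) (n : ℕ) : Type := Xs.X n →₀ ℤ

/-- The differential `d σ = Σ_{i=1}^{n+1} (-1)^i (∂_i^1 σ - ∂_i^0 σ)`. -/
noncomputable def SCSet.d (Xs : SCSet) (n : ℕ) : Xs.C (n + 1) →+ Xs.C n :=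
  Finsupp.liftAddHom fun σ => zmultiplesHom _
    (∑ i : Fin (n + 1), ((-1 : ℤ) ^ ((i : ℕ) + 1)) •
      (Finsupp.single (Xs.face n i true σ) (1 : ℤ) -
       Finsupp.single (Xs.face n i false σ) (1 : ℤ)))

/-- The outgoing differential at level `n` (zero map when `n = 0`). -/
noncomputable def SCSet.dOut (Xs : SCSet) : ∀ n, Xs.C n →+ Xs.C (n - 1)
  | 0 => 0
  | n + 1 => Xs.d n

/-- Homology of the semicubical set. -/
noncomputable def SCSet.H (Xs : SCSet) (n : ℕ) : Type :=
  (Xs.dOut n).ker ⧸ ((Xs.d n).range.addSubgroupOf (Xs.dOut n).ker)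

noncomputable instance (Xs : SCSet) (n : ℕ) : AddCommGroup (Xs.H n) :=
  QuotientAddGroup.Quotient.addCommGroup _

/-- The directed (Goubault) differential `d^ε σ = Σ_i (-1)^i ∂_i^ε σ`. -/
noncomputable def SCSet.dE (Xs : SCSet) (ε : Bool) (n : ℕ) : Xs.C (n + 1) →+ Xs.C n :=
  Finsupp.liftAddHom fun σ => zmultiplesHom _
    (∑ i : Fin (n + 1), ((-1 : ℤ) ^ ((i : ℕ) + 1)) •
      Finsupp.single (Xs.face n i ε σ) (1 : ℤ))

noncomputable def SCSet.dEOut (Xs : SCSet) (ε : Bool) : ∀ n, Xs.C n →+ Xs.C (n - 1)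
  | 0 => 0
  | n + 1 => Xs.dE ε n

/-- Goubault (directed) homology of the semicubical set. -/
noncomputable def SCSet.HE (Xs : SCSet) (ε : Bool) (n : ℕ) : Type :=
  (Xs.dEOut ε n).ker ⧸ ((Xs.dE ε n).range.addSubgroupOf (Xs.dEOut ε n).ker)

noncomputable instance (Xs : SCSet) (ε : Bool) (n : ℕ) : AddCommGroup (Xs.HE ε n) :=
  QuotientAddGroup.Quotient.addCommGroup _

/-- A semicubical subset of a semicubical set: a degreewise family of subsets closed under
the boundary maps. -/
structure SCSub (Xs : SCSet) where
  mem : ∀ n, Set (Xs.X n)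
  closed : ∀ n (i : Fin (n + 1)) (ε : Bool) (x : Xs.X (n + 1)),
    x ∈ mem (n + 1) → Xs.face n i ε x ∈ mem n

/-- The semicubical set carried by a semicubical subset. -/
def SCSub.toSCSet {Xs : SCSet} (A : SCSub Xs) : SCSet where
  X n := A.mem n
  face n i ε x := ⟨Xs.face n i ε x.1, A.closed n i ε x.1 x.2⟩
  comm := by
    intro n α β i j h x
    exact Subtype.ext (Xs.comm n α β i j h x.1)

/-- Degreewise intersection of semicubical subsets. -/
def SCSub.inter {Xs : SCSet} (A B : SCSub Xs) : SCSub Xs where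
  mem n := A.mem n ∩ B.mem n
  closed n i ε x hx := ⟨A.closed n i ε x hx.1, B.closed n i ε x hx.2⟩

/-- Inclusion of chains of a semicubical subset into chains of the ambient semicubical set. -/
noncomputable def SCSub.incl {Xs : SCSet} (A : SCSub Xs) (n : ℕ) :
    A.toSCSet.C n →+ Xs.C n :=
  Finsupp.mapDomain.addMonoidHom Subtype.val

/-- Inclusion of chains of the intersection into chains of the first subset. -/
noncomputable def SCSub.interInclLeft {Xs : SCSet} (A B : SCSub Xs) (n : ℕ) :
    (A.inter B).toSCSet.C n →+ A.toSCSet.C n :=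
  Finsupp.mapDomain.addMonoidHom fun x => ⟨x.1, x.2.1⟩

/-- Inclusion of chains of the intersection into chains of the second subset. -/
noncomputable def SCSub.interInclRight {Xs : SCSet} (A B : SCSub Xs) (n : ℕ) :
    (A.inter B).toSCSet.C n →+ B.toSCSet.C n :=
  Finsupp.mapDomain.addMonoidHom fun x => ⟨x.1, x.2.2⟩

/-- The map `θ : C(X₁ ∩ X₂) → C(X₁) ⊕ C(X₂)`, `σ ↦ σ ⊕ σ`. -/
noncomputable def SCSub.theta {Xs : SCSet} (A B : SCSub Xs) (n : ℕ) :
    (A.inter B).toSCSet.C n →+ A.toSCSet.C n × B.toSCSet.C n :=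
  (A.interInclLeft B n).prod (A.interInclRight B n)

/-- The map `C(X₁) ⊕ C(X₂) → C(X)`, `σ₁ ⊕ σ₂ ↦ σ₁ - σ₂`. -/
noncomputable def SCSub.subMap {Xs : SCSet} (A B : SCSub Xs) (n : ℕ) :
    A.toSCSet.C n × B.toSCSet.C n →+ Xs.C n :=
  (A.incl n).coprod (-(B.incl n))

open CategoryTheory

universe u

namespace AddCommGrpCat

variable {M : ℕ → Type u} [∀ n, AddCommGroup (M n)] (d : ∀ n, M (n + 1) →+ M n)
  (hd : ∀ n, (d n).comp (d (n + 1)) = 0)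

noncomputable def chainComplexOf : ChainComplex AddCommGrpCat.{u} ℕ :=
  ChainComplex.of (fun n => of (M n)) (fun n => ofHom (d n))
    fun n => by ext x; exact DFunLike.congr_fun (hd n) x

lemma chainComplexOf_d (n : ℕ) : (chainComplexOf d hd).d (n + 1) n = ofHom (d n) :=
  ChainComplex.of_d (fun n => of (M n)) (fun n => ofHom (d n)) n

-- `o n` is the differential out of degree `n`; as `0 - 1 = 0` in `ℕ`, `o 0` is an endomorphism.
variable (o : ∀ n, M n →+ M (n - 1)) (ho : ∀ n, o (n + 1) = d n) (ho₀ : o 0 = 0)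

noncomputable def homologyChainComplexOfEquiv (n : ℕ) :
    (chainComplexOf d hd).homology n ≃+ (o n).ker ⧸ (d n).range.addSubgroupOf (o n).ker := by
  let K := chainComplexOf d hd
  have hg : K.d n (n - 1) = ofHom (o n) := by
    cases n with
    | zero => rw [ho₀]; exact K.shape 0 0 (by simp)
    | succ m => rw [ho]; exact chainComplexOf_d d hd m
  let e : K.sc' (n + 1) n (n - 1) ≅ ShortComplex.mk (ofHom (d n)) (ofHom (o n)) (by
      rw [← hg, ← chainComplexOf_d d hd]; exact K.d_comp_d _ _ _) :=
    ShortComplex.isoMk (Iso.refl _) (Iso.refl _) (Iso.refl _)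
      (chainComplexOf_d d hd n).symm hg.symm
  refine (Iso.addCommGroupIsoToAddEquiv (K.homologyIsoSc' (n + 1) n (n - 1) (by simp)
      (by cases n <;> simp) ≪≫ ShortComplex.homologyMapIso e ≪≫
      ShortComplex.abHomologyIso _)).trans (QuotientAddGroup.quotientAddEquivOfEq ?_)
  ext ⟨x, hx⟩
  simp [AddSubgroup.mem_addSubgroupOf, ShortComplex.abToCycles, Subtype.ext_iff]

noncomputable def chainMapOf {M N : ℕ → Type u} [∀ n, AddCommGroup (M n)] [∀ n, AddCommGroup (N n)]
    {dM : ∀ n, M (n + 1) →+ M n} {hdM : ∀ n, (dM n).comp (dM (n + 1)) = 0}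
    {dN : ∀ n, N (n + 1) →+ N n} {hdN : ∀ n, (dN n).comp (dN (n + 1)) = 0}
    (f : ∀ n, M n →+ N n) (hf : ∀ n, (dN n).comp (f (n + 1)) = (f n).comp (dM n)) :
    chainComplexOf dM hdM ⟶ chainComplexOf dN hdN :=
  ChainComplex.ofHom (fun n => ofHom (f n)) fun n => by
    rw [chainComplexOf_d, chainComplexOf_d]
    ext x
    exact DFunLike.congr_fun (hf n) x

variable {M₁ M₂ M₃ : ℕ → Type u} [∀ n, AddCommGroup (M₁ n)] [∀ n, AddCommGroup (M₂ n)]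
  [∀ n, AddCommGroup (M₃ n)]
  {d₁ : ∀ n, M₁ (n + 1) →+ M₁ n} {hd₁ : ∀ n, (d₁ n).comp (d₁ (n + 1)) = 0}
  {d₂ : ∀ n, M₂ (n + 1) →+ M₂ n} {hd₂ : ∀ n, (d₂ n).comp (d₂ (n + 1)) = 0}
  {d₃ : ∀ n, M₃ (n + 1) →+ M₃ n} {hd₃ : ∀ n, (d₃ n).comp (d₃ (n + 1)) = 0}
  {f : ∀ n, M₁ n →+ M₂ n} {g : ∀ n, M₂ n →+ M₃ n}

noncomputable def shortComplexOf (hf : ∀ n, (d₂ n).comp (f (n + 1)) = (f n).comp (d₁ n))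
    (hg : ∀ n, (d₃ n).comp (g (n + 1)) = (g n).comp (d₂ n))
    (hfg : ∀ n, (g n).comp (f n) = 0) : ShortComplex (ChainComplex AddCommGrpCat.{u} ℕ) :=
  ShortComplex.mk (chainMapOf (hdM := hd₁) (hdN := hd₂) f hf)
    (chainMapOf (hdM := hd₂) (hdN := hd₃) g hg) (by
      ext n x
      exact DFunLike.congr_fun (hfg n) x)

lemma shortComplexOf_shortExact {hf : ∀ n, (d₂ n).comp (f (n + 1)) = (f n).comp (d₁ n)}
    {hg : ∀ n, (d₃ n).comp (g (n + 1)) = (g n).comp (d₂ n)}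
    {hfg : ∀ n, (g n).comp (f n) = 0} (hf_inj : ∀ n, Function.Injective (f n))
    (hg_surj : ∀ n, Function.Surjective (g n)) (hfg_exact : ∀ n, Function.Exact (f n) (g n)) :
    (shortComplexOf (hd₁ := hd₁) (hd₂ := hd₂) (hd₃ := hd₃) hf hg hfg).ShortExact := by
  refine HomologicalComplex.shortExact_of_degreewise_shortExact _ fun n => ?_
  exact
    { exact := (ShortComplex.ab_exact_iff_function_exact _).2 (hfg_exact n)
      mono_f := (AddCommGrpCat.mono_iff_injective _).2 (hf_inj n)
      epi_g := (AddCommGrpCat.epi_iff_surjective _).2 (hg_surj n) }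

end AddCommGrpCat

namespace AddMonoidHom

variable {M N P M' N' P' : Type*} [AddCommGroup M] [AddCommGroup N] [AddCommGroup P]
  [AddCommGroup M'] [AddCommGroup N'] [AddCommGroup P']

def kerProdMapEquiv (o : M →+ P) (o' : M' →+ P') : (o.prodMap o').ker ≃+ o.ker × o'.ker where
  toFun x := (⟨x.1.1, congrArg Prod.fst x.2⟩, ⟨x.1.2, congrArg Prod.snd x.2⟩)
  invFun y := ⟨(y.1, y.2), Prod.ext y.1.2 y.2.2⟩
  left_inv _ := rfl
  right_inv _ := rfl
  map_add' _ _ := rfl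

noncomputable def prodMapHomologyEquiv (d : N →+ M) (o : M →+ P) (d' : N' →+ M') (o' : M' →+ P') :
    (o.prodMap o').ker ⧸ (d.prodMap d').range.addSubgroupOf (o.prodMap o').ker ≃+
      (o.ker ⧸ d.range.addSubgroupOf o.ker) × (o'.ker ⧸ d'.range.addSubgroupOf o'.ker) :=
  (QuotientAddGroup.congr _ _ (kerProdMapEquiv o o') (by
    ext x
    rw [AddSubgroup.map_equiv_eq_comap_symm, AddSubgroup.mem_comap, AddSubgroup.mem_prod,
      AddSubgroup.mem_addSubgroupOf, AddSubgroup.mem_addSubgroupOf, AddSubgroup.mem_addSubgroupOf,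
      AddMonoidHom.range_prodMap, AddSubgroup.mem_prod]
    rfl)).trans
    (QuotientAddGroup.prodAddEquiv _ _)

end AddMonoidHom

lemma Function.Exact.addEquiv_conj {A B C A' B' C' : Type*} [AddCommGroup A] [AddCommGroup B]
    [AddCommGroup C] [AddCommGroup A'] [AddCommGroup B'] [AddCommGroup C']
    (eA : A ≃+ A') (eB : B ≃+ B') (eC : C ≃+ C') {f : A →+ B} {g : B →+ C}
    (h : Function.Exact f g) :
    Function.Exact (eB.toAddMonoidHom.comp (f.comp eA.symm.toAddMonoidHom))
      (eC.toAddMonoidHom.comp (g.comp eB.symm.toAddMonoidHom)) :=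
  Function.Exact.of_ladder_addEquiv_of_exact eA eB eC (by ext; simp) (by ext; simp) h

theorem CategoryTheory.ShortComplex.ShortExact.exists_homology_longExact
    {S : ShortComplex (ChainComplex AddCommGrpCat.{u} ℕ)} (hS : S.ShortExact)
    {H₁ H₂ H₃ : ℕ → Type*} [∀ n, AddCommGroup (H₁ n)] [∀ n, AddCommGroup (H₂ n)]
    [∀ n, AddCommGroup (H₃ n)] (e₁ : ∀ n, S.X₁.homology n ≃+ H₁ n)
    (e₂ : ∀ n, S.X₂.homology n ≃+ H₂ n) (e₃ : ∀ n, S.X₃.homology n ≃+ H₃ n) :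
    ∃ (α : ∀ n, H₁ n →+ H₂ n) (β : ∀ n, H₂ n →+ H₃ n) (δ : ∀ n, H₃ (n + 1) →+ H₁ n),
      Function.Surjective (β 0) ∧ (∀ n, Function.Exact (α n) (β n)) ∧
      (∀ n, Function.Exact (β (n + 1)) (δ n)) ∧ (∀ n, Function.Exact (δ n) (α n)) := by
  have hepi : Epi (HomologicalComplex.homologyMap S.g 0) :=
    have := hS.epi_g
    HomologicalComplex.epi_homologyMap_of_epi_of_not_rel S.g 0 (by simp)
  refine ⟨fun n => (e₂ n).toAddMonoidHom.comp
      ((HomologicalComplex.homologyMap S.f n).hom.comp (e₁ n).symm.toAddMonoidHom),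
    fun n => (e₃ n).toAddMonoidHom.comp
      ((HomologicalComplex.homologyMap S.g n).hom.comp (e₂ n).symm.toAddMonoidHom),
    fun n => (e₁ n).toAddMonoidHom.comp
      ((hS.δ (n + 1) n rfl).hom.comp (e₃ (n + 1)).symm.toAddMonoidHom),
    ?_, fun n => ?_, fun n => ?_, fun n => ?_⟩
  · exact (e₃ 0).surjective.comp (((AddCommGrpCat.epi_iff_surjective _).1 hepi).comp
      (e₂ 0).symm.surjective)
  · exact ((ShortComplex.ab_exact_iff_function_exact _).1
      (hS.homology_exact₂ n)).addEquiv_conj _ _ _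
  · exact ((ShortComplex.ab_exact_iff_function_exact _).1
      (hS.homology_exact₃ (n + 1) n rfl)).addEquiv_conj _ _ _
  · exact ((ShortComplex.ab_exact_iff_function_exact _).1
      (hS.homology_exact₁ (n + 1) n rfl)).addEquiv_conj _ _ _

/-- `(j, i)` indexes the term `∂ᵢ ∂ⱼ σ` of `d^ε (d^ε σ)`. For `i < j` the semicubical identity
`∂ᵢ ∂ⱼ = ∂_{j-1} ∂ᵢ` matches it with the term indexed by `(i, j - 1)`, which has the opposite
sign. -/
def Fin.facePairSwap {n : ℕ} (p : Fin (n + 2) × Fin (n + 1)) : Fin (n + 2) × Fin (n + 1) :=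
  if h : (p.2 : ℕ) < p.1 then (p.2.castSucc, ⟨p.1 - 1, by have := p.1.isLt; omega⟩)
  else (p.2.succ, ⟨p.1, by have := p.2.isLt; omega⟩)

namespace Fin

variable {n : ℕ} (p : Fin (n + 2) × Fin (n + 1))

lemma facePairSwap_facePairSwap : facePairSwap (facePairSwap p) = p := by
  by_cases h : (p.2 : ℕ) < p.1
  · have h' : ¬ ((p.1 : ℕ) - 1 < p.2) := by omega
    ext
    · simp only [facePairSwap, h, h', ↓reduceDIte, val_castSucc, val_succ]
      omega
    · simp [facePairSwap, h, h']
  · have h' : (p.1 : ℕ) < p.2 + 1 := by omega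
    ext <;> simp [facePairSwap, h, h']

lemma facePairSwap_ne : facePairSwap p ≠ p := by
  refine mt (fun h => Fin.ext_iff.1 (congrArg Prod.fst h)) ?_
  unfold facePairSwap
  split_ifs <;> simp only [val_castSucc, val_succ] <;> omega

lemma neg_one_pow_facePairSwap :
    (-1 : ℤ) ^ ((facePairSwap p).1 + (facePairSwap p).2 : ℕ) = -(-1) ^ (p.1 + p.2 : ℕ) := by
  unfold facePairSwap
  split_ifs with h
  · obtain ⟨k, hk⟩ : ∃ k, (p.1 : ℕ) = k + 1 := ⟨p.1 - 1, by omega⟩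
    simp only [hk, val_castSucc, add_tsub_cancel_right]
    ring
  · simp only [val_succ]
    ring

end Fin

namespace SCSet

variable (X : SCSet) (ε : Bool)

lemma face_face_facePairSwap {n : ℕ} (p : Fin (n + 2) × Fin (n + 1)) (σ : X.X (n + 2)) :
    X.face n (Fin.facePairSwap p).2 ε (X.face (n + 1) (Fin.facePairSwap p).1 ε σ) =
      X.face n p.2 ε (X.face (n + 1) p.1 ε σ) := by
  unfold Fin.facePairSwap
  split_ifs with h
  · exact (X.comm n ε ε p.2 p.1 h σ).symm
  · have hlt : ((⟨p.1, by omega⟩ : Fin (n + 1)) : ℕ) < (p.2.succ : ℕ) := by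
      show (p.1 : ℕ) < p.2 + 1
      omega
    rw [X.comm n ε ε _ _ hlt]
    rfl

lemma sum_face_face_eq_zero {n : ℕ} (σ : X.X (n + 2)) :
    ∑ p : Fin (n + 2) × Fin (n + 1), (-1 : ℤ) ^ (p.1 + p.2 : ℕ) •
      Finsupp.single (X.face n p.2 ε (X.face (n + 1) p.1 ε σ)) (1 : ℤ) = 0 :=
  Finset.sum_involution (fun p _ => Fin.facePairSwap p)
    (fun p _ => by rw [Fin.neg_one_pow_facePairSwap, face_face_facePairSwap, neg_smul,
      add_neg_cancel])
    (fun p _ _ => Fin.facePairSwap_ne p) (fun p _ => Finset.mem_univ _)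
    (fun p _ => Fin.facePairSwap_facePairSwap p)

lemma dE_single (n : ℕ) (σ : X.X (n + 1)) (k : ℤ) :
    X.dE ε n (Finsupp.single σ k) =
      k • ∑ i : Fin (n + 1), (-1 : ℤ) ^ ((i : ℕ) + 1) • Finsupp.single (X.face n i ε σ) 1 := by
  rw [SCSet.dE, Finsupp.liftAddHom_apply_single, zmultiplesHom_apply]

lemma dE_comp_dE (n : ℕ) : (X.dE ε n).comp (X.dE ε (n + 1)) = 0 := by
  refine Finsupp.addHom_ext fun σ k => ?_
  calc X.dE ε n (X.dE ε (n + 1) (Finsupp.single σ k))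
      = k • ∑ p : Fin (n + 2) × Fin (n + 1), (-1 : ℤ) ^ (p.1 + p.2 : ℕ) •
          Finsupp.single (X.face n p.2 ε (X.face (n + 1) p.1 ε σ)) (1 : ℤ) := by
        simp only [dE_single, map_zsmul, map_sum, Finset.smul_sum, smul_smul,
          ← Finset.univ_product_univ, Finset.sum_product]
        refine Finset.sum_congr rfl fun j _ => Finset.sum_congr rfl fun i _ => ?_
        congr 1
        ring
    _ = 0 := by rw [sum_face_face_eq_zero, smul_zero]

lemma dE_comp_mapDomain {Y Z : SCSet} {ε : Bool} (g : ∀ n, Y.X n → Z.X n)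
    (hg : ∀ n i y, g n (Y.face n i ε y) = Z.face n i ε (g (n + 1) y)) (n : ℕ) :
    (Z.dE ε n).comp (Finsupp.mapDomain.addMonoidHom (g (n + 1))) =
      (Finsupp.mapDomain.addMonoidHom (g n)).comp (Y.dE ε n) := by
  refine Finsupp.addHom_ext fun σ k => ?_
  simp only [AddMonoidHom.comp_apply, Finsupp.mapDomain.addMonoidHom_apply,
    Finsupp.mapDomain_single, dE_single, map_zsmul, map_sum, Finsupp.mapDomain_single, hg]

noncomputable def homologyEquivHE (X : SCSet) (ε : Bool) (n : ℕ) :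
    (AddCommGrpCat.chainComplexOf (X.dE ε) (X.dE_comp_dE ε)).homology n ≃+ X.HE ε n :=
  AddCommGrpCat.homologyChainComplexOfEquiv _ _ (X.dEOut ε) (fun _ => rfl) rfl n

end SCSet

namespace SCSub

variable {Xs : SCSet} (A B : SCSub Xs) (ε : Bool) (n : ℕ)

lemma incl_injective : Function.Injective (A.incl n) :=
  Finsupp.mapDomain_injective Subtype.val_injective

lemma mem_of_mem_support_incl {a : A.toSCSet.C n} {x : Xs.X n} (hx : x ∈ (A.incl n a).support) :
    x ∈ A.mem n := by
  classical
  obtain ⟨y, -, rfl⟩ := Finset.mem_image.1 (Finsupp.mapDomain_support hx)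
  exact y.2

lemma incl_single (x : A.toSCSet.X n) (k : ℤ) :
    A.incl n (Finsupp.single x k) = Finsupp.single x.1 k :=
  Finsupp.mapDomain_single

lemma incl_interInclLeft (c : (A.inter B).toSCSet.C n) :
    A.incl n (A.interInclLeft B n c) = (A.inter B).incl n c :=
  Finsupp.mapDomain_comp.symm

lemma incl_interInclRight (c : (A.inter B).toSCSet.C n) :
    B.incl n (A.interInclRight B n c) = (A.inter B).incl n c :=
  Finsupp.mapDomain_comp.symm

lemma theta_injective : Function.Injective (A.theta B n) := fun c c' h =>
  (A.inter B).incl_injective n <| by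
    rw [← A.incl_interInclLeft, ← A.incl_interInclLeft]
    exact congrArg (A.incl n ∘ Prod.fst) h

lemma subMap_apply (p : A.toSCSet.C n × B.toSCSet.C n) :
    A.subMap B n p = A.incl n p.1 - B.incl n p.2 :=
  (sub_eq_add_neg _ _).symm

lemma subMap_surjective (cover : A.mem n ∪ B.mem n = Set.univ) :
    Function.Surjective (A.subMap B n) := by
  intro w
  induction w using Finsupp.induction_linear with
  | zero => exact ⟨0, map_zero _⟩
  | add w w' hw hw' =>
    obtain ⟨p, rfl⟩ := hw
    obtain ⟨p', rfl⟩ := hw'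
    exact ⟨p + p', map_add _ _ _⟩
  | single x k =>
    rcases cover.symm ▸ Set.mem_univ x with hA | hB
    · exact ⟨(Finsupp.single ⟨x, hA⟩ k, 0),
        by simpa [subMap_apply] using A.incl_single n ⟨x, hA⟩ k⟩
    · exact ⟨(0, -Finsupp.single ⟨x, hB⟩ k),
        by simpa [subMap_apply] using B.incl_single n ⟨x, hB⟩ k⟩

lemma exact_theta_subMap : Function.Exact (A.theta B n) (A.subMap B n) := by
  rintro ⟨a, b⟩
  rw [subMap_apply, sub_eq_zero]
  constructor
  · intro hab
    have hsupp : ↑(A.incl n a).support ⊆ Set.range (Subtype.val : (A.inter B).toSCSet.X n → _) :=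
      fun x hx => ⟨⟨x, A.mem_of_mem_support_incl n hx,
        B.mem_of_mem_support_incl n (hab ▸ hx)⟩, rfl⟩
    have hc := Finsupp.mapDomain_comapDomain _ Subtype.val_injective _ hsupp
    refine ⟨Finsupp.comapDomain _ (A.incl n a) Subtype.val_injective.injOn, Prod.ext ?_ ?_⟩
    · exact A.incl_injective n ((A.incl_interInclLeft B n _).trans hc)
    · exact B.incl_injective n ((A.incl_interInclRight B n _).trans (hc.trans hab))
  · rintro ⟨c, hc⟩
    rw [← hc]
    exact (A.incl_interInclLeft B n c).trans (A.incl_interInclRight B n c).symm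

lemma dE_comp_incl : (Xs.dE ε n).comp (A.incl (n + 1)) = (A.incl n).comp (A.toSCSet.dE ε n) :=
  SCSet.dE_comp_mapDomain (Y := A.toSCSet) (fun _ x => x.1) (fun _ _ _ => rfl) n

lemma dE_comp_interInclLeft :
    (A.toSCSet.dE ε n).comp (A.interInclLeft B (n + 1)) =
      (A.interInclLeft B n).comp ((A.inter B).toSCSet.dE ε n) :=
  SCSet.dE_comp_mapDomain (Y := (A.inter B).toSCSet) (Z := A.toSCSet)
    (fun _ x => ⟨x.1, x.2.1⟩) (fun _ _ _ => rfl) n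

lemma dE_comp_interInclRight :
    (B.toSCSet.dE ε n).comp (A.interInclRight B (n + 1)) =
      (A.interInclRight B n).comp ((A.inter B).toSCSet.dE ε n) :=
  SCSet.dE_comp_mapDomain (Y := (A.inter B).toSCSet) (Z := B.toSCSet)
    (fun _ x => ⟨x.1, x.2.2⟩) (fun _ _ _ => rfl) n

lemma dE_comp_theta :
    ((A.toSCSet.dE ε n).prodMap (B.toSCSet.dE ε n)).comp (A.theta B (n + 1)) =
      (A.theta B n).comp ((A.inter B).toSCSet.dE ε n) := by
  refine AddMonoidHom.ext fun x => ?_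
  exact Prod.ext (DFunLike.congr_fun (A.dE_comp_interInclLeft B ε n) x)
    (DFunLike.congr_fun (A.dE_comp_interInclRight B ε n) x)

lemma dE_comp_subMap :
    (Xs.dE ε n).comp (A.subMap B (n + 1)) =
      (A.subMap B n).comp ((A.toSCSet.dE ε n).prodMap (B.toSCSet.dE ε n)) := by
  refine AddMonoidHom.ext fun x => ?_
  rw [AddMonoidHom.comp_apply, AddMonoidHom.comp_apply, subMap_apply, subMap_apply, map_sub]
  exact congr_arg₂ (· - ·) (DFunLike.congr_fun (A.dE_comp_incl ε n) x.1)
    (DFunLike.congr_fun (B.dE_comp_incl ε n) x.2)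

end SCSub

/-- Mayer–Vietoris for the Goubault (directed) homology of semicubical sets: if
`X = X₁ ∪ X₂` is a union of semicubical subsets then for each `ε ∈ {0,1}` there is a long
exact sequence
`⋯ → H_n^ε(X₁ ∩ X₂) → H_n^ε(X₁) ⊕ H_n^ε(X₂) → H_n^ε(X) → H_{n-1}^ε(X₁ ∩ X₂) → ⋯`. -/
theorem semicubical_mayer_vietoris_goubault (Xs : SCSet) (A B : SCSub Xs)
    (cover : ∀ n, A.mem n ∪ B.mem n = Set.univ) (ε : Bool) :
    ∃ (α : ∀ n, (A.inter B).toSCSet.HE ε n →+ A.toSCSet.HE ε n × B.toSCSet.HE ε n)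
      (β : ∀ n, A.toSCSet.HE ε n × B.toSCSet.HE ε n →+ Xs.HE ε n)
      (δ : ∀ n, Xs.HE ε (n + 1) →+ (A.inter B).toSCSet.HE ε n),
        Function.Surjective (β 0) ∧
        (∀ n, Function.Exact (α n) (β n)) ∧
        (∀ n, Function.Exact (β (n + 1)) (δ n)) ∧
        (∀ n, Function.Exact (δ n) (α n)) := by
  have hd : ∀ n, ((A.toSCSet.dE ε n).prodMap (B.toSCSet.dE ε n)).comp
      ((A.toSCSet.dE ε (n + 1)).prodMap (B.toSCSet.dE ε (n + 1))) = 0 := fun n =>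
    AddMonoidHom.ext fun x => Prod.ext (DFunLike.congr_fun (A.toSCSet.dE_comp_dE ε n) x.1)
      (DFunLike.congr_fun (B.toSCSet.dE_comp_dE ε n) x.2)
  have hS := AddCommGrpCat.shortComplexOf_shortExact (hd₁ := (A.inter B).toSCSet.dE_comp_dE ε)
    (hd₂ := hd) (hd₃ := Xs.dE_comp_dE ε) (hf := A.dE_comp_theta B ε) (hg := A.dE_comp_subMap B ε)
    (hfg := fun n => (A.exact_theta_subMap B n).addMonoidHom_comp_eq_zero)
    (A.theta_injective B) (fun n => A.subMap_surjective B n (cover n)) (A.exact_theta_subMap B)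
  exact hS.exists_homology_longExact ((A.inter B).toSCSet.homologyEquivHE ε)
    (fun n => (AddCommGrpCat.homologyChainComplexOfEquiv _ hd
      (fun n => (A.toSCSet.dEOut ε n).prodMap (B.toSCSet.dEOut ε n)) (fun _ => rfl)
      (AddMonoidHom.ext fun _ => rfl) n).trans (AddMonoidHom.prodMapHomologyEquiv _ _ _ _))
    (Xs.homologyEquivHE ε)
end

section
/- The state category C_n of the Petri net N_n (the pipeline net on transitions t₂,…,t_n with places p₁,…,p_{n-1}, obtained from the pipeline net by deleting t₁) is a partially ordered set having a least element 11⋯1 and a greatest element 00⋯0: for any two states x, y there is at most one trace μ with x·μ = y, and x·μ = y together with y·ν = x forces μ = ν = 1. -/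
/-! Concrete pipeline Petri nets. States of a net with `m` places are `Fin m → Bool`. -/

/-- The "tail" pipeline net `N` with `m` places `p₁,…,p_m` (0-indexed `0,…,m-1`) and `m`
events `t₂,…,t_{m+1}` (0-indexed: event `j` is `t_{j+2}` with `pre = {p_{j+1}}`, i.e. place
`j`, and `post = {p_{j+2}}`, i.e. place `j+1`, when `j+1 < m`, and `post = ∅` for the last
event).  `stepT m s e` is the partial firing of event `e` at state `s`. -/
def stepT (m : ℕ) (s : Fin m → Bool) (e : Fin m) : Option (Fin m → Bool) :=
  if s e = true then
    if h : (e : ℕ) + 1 < m then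
      if s ⟨(e : ℕ) + 1, h⟩ = false then
        some (Function.update (Function.update s e false) ⟨(e : ℕ) + 1, h⟩ true)
      else none
    else some (Function.update s e false)
  else none

/-- Firing a word (list) of events, `s · (a :: l) = (s · a) · l`. -/
def stepsT (m : ℕ) : (Fin m → Bool) → List (Fin m) → Option (Fin m → Bool)
  | s, [] => some s
  | s, a :: l => (stepT m s a).bind fun s' => stepsT m s' l

/-- Resources (`pre ∪ post`, as a set of 0-indexed places) of event `e` of the tail net. -/
def resT (m : ℕ) (e : Fin m) : Set ℕ :=
  {x | x = (e : ℕ) ∨ (x = (e : ℕ) + 1 ∧ (e : ℕ) + 1 < m)}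

/-- Independence of events of the tail net: disjoint resources. -/
def indepT (m : ℕ) (a b : Fin m) : Prop :=
  ∀ x, ¬(x ∈ resT m a ∧ x ∈ resT m b)

/-- One swap of adjacent independent letters in a word. -/
inductive TraceStep {E : Type} (r : E → E → Prop) : List E → List E → Prop
  | swap (u v : List E) (a b : E) : r a b →
      TraceStep r (u ++ a :: b :: v) (u ++ b :: a :: v)

/-- Trace equivalence: two words represent the same element of the trace monoid `M(E,I)`
iff they are related by the equivalence closure of adjacent swaps of independent letters. -/
def TraceEquiv {E : Type} (r : E → E → Prop) : List E → List E → Prop :=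
  Relation.EqvGen (TraceStep r)


/-!
Two distinct events enabled at the same state have disjoint resources, and then they commute
(a diamond). Event `p` is the only one that changes the number of tokens in places `0, …, p`,
and it lowers it by one, so the endpoints of a run determine how often each event occurs in it.
Hence if `x → y` by `b :: l₂` and by `l₁`, then `b` occurs in `l₁`, and the diamonds let it be
swapped to the front of `l₁`; induction on `l₂` gives trace equivalence. The same count rules
out nonempty cycles, which is antisymmetry. The sum over `p` of these token numbers drops by one
per firing; this is the termination measure for reaching `00⋯0` by always moving the last token,
and for reaching any state from `11⋯1` by undoing firings.
-/

theorem Fin.sum_ite_val_eq_and {m : ℕ} (k : ℕ) (q : Prop) [Decidable q] :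
    (∑ i : Fin m, if (i : ℕ) = k ∧ q then 1 else 0) = if k < m ∧ q then 1 else 0 := by
  by_cases hq : q
  · simp only [hq, and_true]
    rw [Fin.sum_univ_eq_sum_range (fun j => if j = k then 1 else 0) m, Finset.sum_ite_eq']
    simp
  · simp [hq]


namespace TraceEquiv

variable {E : Type} {r : E → E → Prop}

theorem refl (l : List E) : TraceEquiv r l l :=
  Relation.EqvGen.refl l

theorem trans {l₁ l₂ l₃ : List E} (h₁₂ : TraceEquiv r l₁ l₂) (h₂₃ : TraceEquiv r l₂ l₃) :
    TraceEquiv r l₁ l₃ :=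
  Relation.EqvGen.trans _ _ _ h₁₂ h₂₃

theorem swap {a b : E} (h : r a b) (l : List E) : TraceEquiv r (a :: b :: l) (b :: a :: l) :=
  Relation.EqvGen.rel _ _ (TraceStep.swap [] l a b h)

theorem cons {l l' : List E} (h : TraceEquiv r l l') (a : E) : TraceEquiv r (a :: l) (a :: l') := by
  induction h with
  | rel _ _ hstep =>
    obtain ⟨u, v, b, c, hbc⟩ := hstep
    exact Relation.EqvGen.rel _ _ (TraceStep.swap (a :: u) v b c hbc)
  | refl => exact refl _
  | symm _ _ _ ih => exact Relation.EqvGen.symm _ _ ih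
  | trans _ _ _ _ _ ih₁ ih₂ => exact ih₁.trans ih₂

end TraceEquiv

namespace TailNet

variable {m : ℕ}

def fire (s : Fin m → Bool) (e : Fin m) : Fin m → Bool :=
  fun i => if i = e then false else if (i : ℕ) = e + 1 then true else s i

def Enabled (s : Fin m → Bool) (e : Fin m) : Prop :=
  s e = true ∧ ∀ h : (e : ℕ) + 1 < m, s ⟨e + 1, h⟩ = false

theorem fire_eq_update_update {s : Fin m → Bool} {e : Fin m} (h : (e : ℕ) + 1 < m) :
    fire s e = Function.update (Function.update s e false) ⟨e + 1, h⟩ true := by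
  ext i
  simp only [fire, Function.update_apply, Fin.ext_iff]
  split_ifs <;> first | rfl | omega

theorem fire_eq_update {s : Fin m → Bool} {e : Fin m} (h : ¬(e : ℕ) + 1 < m) :
    fire s e = Function.update s e false := by
  ext i
  simp only [fire, Function.update_apply, Fin.ext_iff]
  split_ifs <;> first | rfl | omega

theorem stepT_eq_some_iff {s s' : Fin m → Bool} {e : Fin m} :
    stepT m s e = some s' ↔ Enabled s e ∧ fire s e = s' := by
  unfold stepT Enabled
  by_cases hlt : (e : ℕ) + 1 < m
  · cases s e <;> cases h : s ⟨e + 1, hlt⟩ <;> simp [hlt, h, fire_eq_update_update hlt]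
  · simp [hlt, fire_eq_update hlt]

@[simp]
theorem stepsT_nil {s s' : Fin m → Bool} : stepsT m s [] = some s' ↔ s = s' := by
  simp [stepsT]

theorem stepsT_cons_eq_some_iff {x y : Fin m → Bool} {a : Fin m} {l : List (Fin m)} :
    stepsT m x (a :: l) = some y ↔ ∃ z, stepT m x a = some z ∧ stepsT m z l = some y := by
  simp [stepsT, Option.bind_eq_some_iff]

theorem stepsT_append (x : Fin m → Bool) (l₁ l₂ : List (Fin m)) :
    stepsT m x (l₁ ++ l₂) = (stepsT m x l₁).bind fun z => stepsT m z l₂ := by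
  induction l₁ generalizing x with
  | nil => rfl
  | cons a l ih =>
    simp only [List.cons_append, stepsT, ih, Option.bind_assoc]

theorem indepT_iff {a b : Fin m} :
    indepT m a b ↔ (a : ℕ) ≠ b ∧ (a : ℕ) ≠ b + 1 ∧ (b : ℕ) ≠ a + 1 := by
  simp only [indepT, resT, Set.mem_ofPred_eq]
  constructor
  · intro h
    have := h a
    have := h b
    omega
  · intro h x
    omega

theorem Enabled.apply_eq_false_of_val_eq_succ {s : Fin m → Bool} {e i : Fin m} (he : Enabled s e)
    (h : (i : ℕ) = e + 1) : s i = false := by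
  have hi : (⟨e + 1, h ▸ i.isLt⟩ : Fin m) = i := Fin.ext h.symm
  simpa only [hi] using he.2 (h ▸ i.isLt)

theorem Enabled.val_ne_succ {s : Fin m → Bool} {e f : Fin m} (he : Enabled s e)
    (hf : Enabled s f) : (f : ℕ) ≠ e + 1 :=
  fun h => Bool.noConfusion (hf.1.symm.trans (he.apply_eq_false_of_val_eq_succ h))

theorem indepT_of_enabled {s : Fin m → Bool} {a b : Fin m} (ha : Enabled s a) (hb : Enabled s b)
    (hab : a ≠ b) : indepT m a b :=
  indepT_iff.2 ⟨Fin.val_ne_of_ne hab, hb.val_ne_succ ha, ha.val_ne_succ hb⟩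

theorem fire_apply_of_ne {s : Fin m → Bool} {e i : Fin m} (h₀ : (i : ℕ) ≠ e)
    (h₁ : (i : ℕ) ≠ e + 1) : fire s e i = s i := by
  simp [fire, Fin.ext_iff, h₀, h₁]

theorem fire_comm {s : Fin m → Bool} {a b : Fin m} (h : indepT m a b) :
    fire (fire s a) b = fire (fire s b) a := by
  rw [indepT_iff] at h
  ext i
  simp only [fire, Fin.ext_iff]
  split_ifs <;> first | rfl | omega

theorem enabled_fire_iff {s : Fin m → Bool} {a b : Fin m} (h : indepT m a b) :
    Enabled (fire s a) b ↔ Enabled s b := by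
  rw [indepT_iff] at h
  unfold Enabled
  rw [fire_apply_of_ne (by omega) (by omega)]
  refine and_congr_right fun _ => forall_congr' fun hb => ?_
  rw [fire_apply_of_ne (by simp; omega) (by simp; omega)]

theorem stepT_diamond {s s₁ s₂ : Fin m → Bool} {a b : Fin m} (h : indepT m a b)
    (h₁ : stepT m s a = some s₁) (h₂ : stepT m s b = some s₂) :
    ∃ w, stepT m s₁ b = some w ∧ stepT m s₂ a = some w := by
  rw [stepT_eq_some_iff] at h₁ h₂
  obtain ⟨ha, rfl⟩ := h₁
  obtain ⟨hb, rfl⟩ := h₂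
  have h' : indepT m b a := fun x hx => h x hx.symm
  exact ⟨_, stepT_eq_some_iff.2 ⟨(enabled_fire_iff h).2 hb, rfl⟩,
    stepT_eq_some_iff.2 ⟨(enabled_fire_iff h').2 ha, (fire_comm h).symm⟩⟩

def tokensUpTo (p : Fin m) (s : Fin m → Bool) : ℕ :=
  ∑ i : Fin m, if (i : ℕ) ≤ p ∧ s i = true then 1 else 0

theorem tokensUpTo_fire {s : Fin m → Bool} {e : Fin m} (he : Enabled s e) (p : Fin m) :
    tokensUpTo p s = tokensUpTo p (fire s e) + if e = p then 1 else 0 := by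
  -- the correction terms are the token leaving place `e` and the one entering place `e + 1`
  have pointwise : ∀ i : Fin m,
      ((if (i : ℕ) ≤ p ∧ s i = true then 1 else 0) +
        if (i : ℕ) = e + 1 ∧ (e : ℕ) < p then 1 else 0) =
      (if (i : ℕ) ≤ p ∧ fire s e i = true then 1 else 0) +
        if (i : ℕ) = e ∧ (e : ℕ) ≤ p then 1 else 0 := by
    intro i
    by_cases hie : i = e
    · simp [hie, fire, he.1]
    by_cases hie₁ : (i : ℕ) = e + 1
    · simp [hie, hie₁, fire, he.apply_eq_false_of_val_eq_succ hie₁]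
    · simp [fire_apply_of_ne (Fin.val_ne_of_ne hie) hie₁, hie₁, Fin.val_ne_of_ne hie]
  have hsum := Finset.sum_congr rfl fun i (_ : i ∈ Finset.univ) => pointwise i
  simp only [Finset.sum_add_distrib, Fin.sum_ite_val_eq_and] at hsum
  unfold tokensUpTo
  have := p.isLt
  simp only [Fin.ext_iff]
  split_ifs at hsum ⊢ <;> omega

theorem tokensUpTo_of_stepsT {x y : Fin m → Bool} {l : List (Fin m)} (h : stepsT m x l = some y)
    (p : Fin m) : tokensUpTo p x = tokensUpTo p y + l.count p := by
  induction l generalizing x with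
  | nil => simp_all
  | cons a l ih =>
    obtain ⟨z, hxz, hzy⟩ := stepsT_cons_eq_some_iff.1 h
    obtain ⟨ha, rfl⟩ := stepT_eq_some_iff.1 hxz
    rw [tokensUpTo_fire ha p, ih hzy, List.count_cons]
    simp only [beq_iff_eq]
    omega

theorem count_eq_of_stepsT {x y : Fin m → Bool} {l₁ l₂ : List (Fin m)}
    (h₁ : stepsT m x l₁ = some y) (h₂ : stepsT m x l₂ = some y) (p : Fin m) :
    l₁.count p = l₂.count p := by
  have := tokensUpTo_of_stepsT h₁ p
  have := tokensUpTo_of_stepsT h₂ p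
  omega

theorem eq_nil_of_stepsT_self {x : Fin m → Bool} {l : List (Fin m)}
    (h : stepsT m x l = some x) : l = [] :=
  List.eq_nil_iff_forall_not_mem.2 fun p => List.count_eq_zero.1 <| by
    simpa using count_eq_of_stepsT h (stepsT_nil.2 rfl) p

def potential (s : Fin m → Bool) : ℕ :=
  ∑ p, tokensUpTo p s

theorem potential_fire {s : Fin m → Bool} {e : Fin m} (he : Enabled s e) :
    potential s = potential (fire s e) + 1 := by
  simp [potential, tokensUpTo_fire he, Finset.sum_add_distrib]

theorem potential_le_potential_true (s : Fin m → Bool) :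
    potential s ≤ potential fun _ : Fin m => true := by
  unfold potential tokensUpTo
  gcongr with p _ i
  split_ifs <;> simp_all

theorem exists_enabled {x : Fin m → Bool} (hx : x ≠ fun _ => false) : ∃ e, Enabled x e := by
  obtain ⟨i, hi⟩ := Function.ne_iff.1 hx
  obtain ⟨e, he, hmax⟩ := Set.exists_max_image {i | x i = true} (fun i => (i : ℕ))
    (Set.toFinite _) ⟨i, by simpa using hi⟩
  refine ⟨e, he, fun hlt => ?_⟩
  by_contra hnext
  simpa using hmax ⟨e + 1, hlt⟩ (by simpa using hnext)

theorem exists_enabled_fire_eq {x : Fin m → Bool} (hx : x ≠ fun _ => true) :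
    ∃ x' e, Enabled x' e ∧ fire x' e = x := by
  obtain ⟨i, hi⟩ := Function.ne_iff.1 hx
  obtain ⟨e, he, hmax⟩ := Set.exists_max_image {i | x i = false} (fun i => (i : ℕ))
    (Set.toFinite _) ⟨i, by simpa using hi⟩
  -- undo a firing at the last empty place `e`; place `e + 1`, if any, is full by maximality
  refine ⟨fun i => if i = e then true else if (i : ℕ) = e + 1 then false else x i, e,
    ⟨by simp, fun _ => by simp [Fin.ext_iff]⟩, ?_⟩
  ext i
  simp only [fire]
  split_ifs with h₀ h₁
  · exact (h₀ ▸ he).symm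
  · by_contra hne
    have := hmax i (by simpa using Ne.symm hne)
    omega
  · rfl

theorem exists_stepsT_eq_false (x : Fin m → Bool) :
    ∃ l, stepsT m x l = some fun _ => false := by
  by_cases hx : x = fun _ => false
  · exact ⟨[], stepsT_nil.2 hx⟩
  obtain ⟨e, he⟩ := exists_enabled hx
  have := potential_fire he
  obtain ⟨l, hl⟩ := exists_stepsT_eq_false (fire x e)
  exact ⟨e :: l, stepsT_cons_eq_some_iff.2 ⟨_, stepT_eq_some_iff.2 ⟨he, rfl⟩, hl⟩⟩
termination_by potential x

theorem exists_stepsT_true_eq (x : Fin m → Bool) :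
    ∃ l, stepsT m (fun _ => true) l = some x := by
  by_cases hx : x = fun _ => true
  · exact ⟨[], stepsT_nil.2 hx.symm⟩
  obtain ⟨x', e, he, rfl⟩ := exists_enabled_fire_eq hx
  have := potential_fire he
  have := potential_le_potential_true x'
  obtain ⟨l, hl⟩ := exists_stepsT_true_eq x'
  refine ⟨l ++ [e], ?_⟩
  simp [stepsT_append, hl, stepsT, stepT_eq_some_iff.2 ⟨he, rfl⟩]
termination_by potential (fun _ : Fin m => true) - potential x

theorem exists_traceEquiv_cons_of_stepT {x y z : Fin m → Bool} {b : Fin m} {l : List (Fin m)}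
    (hb : stepT m x b = some z) (hl : stepsT m x l = some y) (hmem : b ∈ l) :
    ∃ l', TraceEquiv (indepT m) l (b :: l') ∧ stepsT m z l' = some y := by
  induction l generalizing x z with
  | nil => simp at hmem
  | cons c l ih =>
    obtain ⟨x₁, hc, hl⟩ := stepsT_cons_eq_some_iff.1 hl
    by_cases hcb : c = b
    · subst hcb
      rw [hb] at hc
      cases hc
      exact ⟨l, TraceEquiv.refl _, hl⟩
    have hind : indepT m c b :=
      indepT_of_enabled (stepT_eq_some_iff.1 hc).1 (stepT_eq_some_iff.1 hb).1 hcb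
    obtain ⟨w, hb₁, hc₁⟩ := stepT_diamond hind hc hb
    obtain ⟨l', hequiv, hw⟩ := ih hb₁ hl (List.mem_of_ne_of_mem (Ne.symm hcb) hmem)
    exact ⟨c :: l', (hequiv.cons c).trans (TraceEquiv.swap hind l'),
      stepsT_cons_eq_some_iff.2 ⟨w, hc₁, hw⟩⟩

theorem traceEquiv_of_stepsT {x y : Fin m → Bool} {l₁ l₂ : List (Fin m)}
    (h₁ : stepsT m x l₁ = some y) (h₂ : stepsT m x l₂ = some y) :
    TraceEquiv (indepT m) l₁ l₂ := by
  induction l₂ generalizing x l₁ with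
  | nil =>
    obtain rfl := stepsT_nil.1 h₂
    obtain rfl := eq_nil_of_stepsT_self h₁
    exact TraceEquiv.refl _
  | cons b l₂ ih =>
    obtain ⟨x₂, hb, h₂⟩ := stepsT_cons_eq_some_iff.1 h₂
    have hmem : b ∈ l₁ := List.count_pos_iff.1 <| by
      rw [count_eq_of_stepsT h₁ (stepsT_cons_eq_some_iff.2 ⟨x₂, hb, h₂⟩)]
      simp
    obtain ⟨l', hequiv, hl'⟩ := exists_traceEquiv_cons_of_stepT hb h₁ hmem
    exact hequiv.trans ((ih hl' h₂).cons b)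

theorem eq_nil_of_stepsT_of_stepsT {x y : Fin m → Bool} {l l' : List (Fin m)}
    (h : stepsT m x l = some y) (h' : stepsT m y l' = some x) : l = [] ∧ l' = [] :=
  List.append_eq_nil_iff.1 <| eq_nil_of_stepsT_self <| by rw [stepsT_append, h]; exact h'

end TailNet

theorem pipeline_state_category_is_poset_general (n : ℕ) :
    (∀ (x y : Fin (n - 1) → Bool) (l₁ l₂ : List (Fin (n - 1))),
        stepsT (n - 1) x l₁ = some y → stepsT (n - 1) x l₂ = some y →
        TraceEquiv (indepT (n - 1)) l₁ l₂) ∧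
    (∀ (x y : Fin (n - 1) → Bool) (l l' : List (Fin (n - 1))),
        stepsT (n - 1) x l = some y → stepsT (n - 1) y l' = some x →
        l = [] ∧ l' = []) ∧
    (∀ x : Fin (n - 1) → Bool, ∃ l, stepsT (n - 1) (fun _ => true) l = some x) ∧
    (∀ x : Fin (n - 1) → Bool, ∃ l, stepsT (n - 1) x l = some (fun _ => false)) :=
  ⟨fun _ _ _ _ => TailNet.traceEquiv_of_stepsT,
    fun _ _ _ _ => TailNet.eq_nil_of_stepsT_of_stepsT,
    TailNet.exists_stepsT_true_eq, TailNet.exists_stepsT_eq_false⟩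

/-- The state category `C_n` of the net `N_n` (the pipeline net on transitions `t₂,…,t_n`
with places `p₁,…,p_{n-1}`, here with `m = n-1` places and events) is a partially ordered
set with least element `11⋯1` and greatest element `00⋯0`: between any two states there is
at most one trace (any two words realizing `x → y` are trace equivalent), the resulting
preorder is antisymmetric (mutually reachable states coincide, with both traces trivial),
`11⋯1` reaches every state and every state reaches `00⋯0`. -/
theorem pipeline_state_category_is_poset (n : ℕ) (hn : 2 ≤ n) :
    (∀ (x y : Fin (n - 1) → Bool) (l₁ l₂ : List (Fin (n - 1))),
        stepsT (n - 1) x l₁ = some y → stepsT (n - 1) x l₂ = some y →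
        TraceEquiv (indepT (n - 1)) l₁ l₂) ∧
    (∀ (x y : Fin (n - 1) → Bool) (l l' : List (Fin (n - 1))),
        stepsT (n - 1) x l = some y → stepsT (n - 1) y l' = some x →
        l = [] ∧ l' = []) ∧
    (∀ x : Fin (n - 1) → Bool, ∃ l, stepsT (n - 1) (fun _ => true) l = some x) ∧
    (∀ x : Fin (n - 1) → Bool, ∃ l, stepsT (n - 1) x l = some (fun _ => false)) :=
  pipeline_state_category_is_poset_general n
end

section
/- For a state space (S, M(E,I)), the group H₀⁰(S, M(E,I)) is isomorphic to the free abelian group generated by the deadlock states, and H₀¹(S, M(E,I)) is isomorphic to the free abelian group generated by the sender states. -/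
/-! Degree-0 directed homology of a state space `(S, M(E,I))` with a partial action
`act : S → E → Option S` of events on states. -/

/-- `Q₁ = {(s,a) : s·a is defined}`, the 1-cubes of the state space. -/
def Q1 (S E : Type) (act : S → E → Option S) : Type :=
  {p : S × E // (act p.1 p.2).isSome}

/-- The differential `d₁⁰ : L(Q₁) → L(Q₀)`, `d₁⁰(s,a) = -s` (here `Q₀ = S`). -/
noncomputable def d10 (S E : Type) (act : S → E → Option S) :
    (Q1 S E act →₀ ℤ) →+ (S →₀ ℤ) :=
  Finsupp.liftAddHom fun σ => zmultiplesHom _ (-(Finsupp.single σ.1.1 (1 : ℤ)))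

/-- The differential `d₁¹ : L(Q₁) → L(Q₀)`, `d₁¹(s,a) = -(s·a)`. -/
noncomputable def d11 (S E : Type) (act : S → E → Option S) :
    (Q1 S E act →₀ ℤ) →+ (S →₀ ℤ) :=
  Finsupp.liftAddHom fun σ =>
    zmultiplesHom _ (-(Finsupp.single ((act σ.1.1 σ.1.2).getD σ.1.1) (1 : ℤ)))

/-- The initial directed homology `H₀⁰(S, M(E,I))`: the cokernel of `d₁⁰`. -/
def H00 (S E : Type) (act : S → E → Option S) : Type :=
  (S →₀ ℤ) ⧸ (d10 S E act).range

/-- The final directed homology `H₀¹(S, M(E,I))`: the cokernel of `d₁¹`. -/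
def H01 (S E : Type) (act : S → E → Option S) : Type :=
  (S →₀ ℤ) ⧸ (d11 S E act).range

noncomputable instance (S E : Type) (act : S → E → Option S) : AddCommGroup (H00 S E act) :=
  QuotientAddGroup.Quotient.addCommGroup _

noncomputable instance (S E : Type) (act : S → E → Option S) : AddCommGroup (H01 S E act) :=
  QuotientAddGroup.Quotient.addCommGroup _

/-- A state is a deadlock if no event is enabled at it. -/
def IsDeadlock (S E : Type) (act : S → E → Option S) (s : S) : Prop :=
  ∀ a, act s a = none

/-- A state is a sender if it is not of the form `s′·a`. -/
def IsSender (S E : Type) (act : S → E → Option S) (s : S) : Prop :=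
  ∀ s' a, act s' a ≠ some s

/-! Both differentials are, definitionally, of the form `σ ↦ -(g σ)` on generators, with `g` the
source resp. the target map of `Q₁`. The image of such a map is the free abelian group on the
range of `g`, so its cokernel is free on the states outside that range: the states where no
event starts (deadlocks) for `d₁⁰`, and those where no event ends (senders) for `d₁¹`. -/

noncomputable def negSingleHom {A S : Type} (g : A → S) : (A →₀ ℤ) →+ (S →₀ ℤ) :=
  Finsupp.liftAddHom fun σ => zmultiplesHom _ (-(Finsupp.single (g σ) (1 : ℤ)))

section negSingleHom

variable {A S : Type} (g : A → S)

theorem negSingleHom_single (σ : A) (n : ℤ) :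
    negSingleHom g (Finsupp.single σ n) = Finsupp.single (g σ) (-n) := by
  rw [negSingleHom, Finsupp.liftAddHom_apply_single, zmultiplesHom_apply, smul_neg,
    Finsupp.smul_single_one, Finsupp.single_neg]

theorem range_negSingleHom (P : S → Prop) (hP : ∀ s, P s ↔ s ∉ Set.range g) :
    (negSingleHom g).range = (Finsupp.subtypeDomainAddMonoidHom (p := P)).ker := by
  apply le_antisymm
  · rintro _ ⟨x, rfl⟩
    induction x using Finsupp.induction_linear with
    | zero => simp
    | add x y hx hy => simpa using add_mem hx hy
    | single σ n =>
      ext ⟨s, hs⟩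
      have hne : g σ ≠ s := fun h => (hP s).mp hs ⟨σ, h⟩
      change negSingleHom g (Finsupp.single σ n) s = 0
      rw [negSingleHom_single, Finsupp.single_eq_of_ne hne.symm]
  · intro f hf
    have hf_zero : ∀ s, P s → f s = 0 := fun s hs => DFunLike.congr_fun hf ⟨s, hs⟩
    rw [← Finsupp.sum_single f]
    refine AddSubgroup.sum_mem _ fun s hs => ?_
    have hns : ¬P s := fun h => Finsupp.mem_support_iff.mp hs (hf_zero s h)
    obtain ⟨σ, rfl⟩ := not_not.mp (mt (hP s).mpr hns)
    exact ⟨Finsupp.single σ (-f (g σ)), by rw [negSingleHom_single, neg_neg]⟩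

noncomputable def cokerNegSingleHomEquiv (P : S → Prop) (hP : ∀ s, P s ↔ s ∉ Set.range g) :
    ((S →₀ ℤ) ⧸ (negSingleHom g).range) ≃+ ({s // P s} →₀ ℤ) := by
  classical
  exact (QuotientAddGroup.quotientAddEquivOfEq (range_negSingleHom g P hP)).trans
    (QuotientAddGroup.quotientKerEquivOfSurjective _ fun f =>
      ⟨f.extendDomain, Finsupp.subtypeDomain_extendDomain f⟩)

end negSingleHom

section StateSpace

variable {S E : Type} {act : S → E → Option S}

theorem isDeadlock_iff_notMem_range (s : S) :
    IsDeadlock S E act s ↔ s ∉ Set.range fun σ : Q1 S E act => σ.1.1 := by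
  simp only [IsDeadlock, Set.mem_range, Q1, Subtype.exists, Prod.exists, exists_prop,
    exists_and_right, exists_eq_right, Option.isSome_iff_ne_none, not_exists, not_not]

theorem isSender_iff_notMem_range (s : S) :
    IsSender S E act s ↔ s ∉ Set.range fun σ : Q1 S E act => (act σ.1.1 σ.1.2).getD σ.1.1 := by
  simp only [IsSender, Set.mem_range, Q1, Subtype.exists, Prod.exists, not_exists]
  refine forall_congr' fun s' => forall_congr' fun a => ?_
  cases h : act s' a <;> simp

end StateSpace

/-- For a state space `(S, M(E,I))`, `H₀⁰` is the free abelian group generated by the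
deadlock states, and `H₀¹` is the free abelian group generated by the sender states. -/
theorem H0_directed_description (S E : Type) (act : S → E → Option S) :
    Nonempty (H00 S E act ≃+ ({s : S // IsDeadlock S E act s} →₀ ℤ)) ∧
    Nonempty (H01 S E act ≃+ ({s : S // IsSender S E act s} →₀ ℤ)) :=
  ⟨⟨cokerNegSingleHomEquiv _ _ isDeadlock_iff_notMem_range⟩,
   ⟨cokerNegSingleHomEquiv _ _ isSender_iff_notMem_range⟩⟩
end
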